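/- arXiv:0904.4289 — 6 statements merged into one kernel-verified Lean document; each statement's English description precedes it below -/
import Mathlib

section
/- Let N ≥ 1 and let Λ be a real diagonal N×N matrix with Λ_i + Λ_j > 0 for all i ≠ j. Suppose Q, P : ℝ → Matrix (Fin N) (Fin N) ℝ are differentiable curves and Ω : ℝ → Matrix (Fin N) (Fin N) ℝ is a curve of skew-symmetric matrices (Ω(t)ᵀ = −Ω(t)) such that for all t: ΛΩ(t) + Ω(t)Λ = Q(t)ᵀP(t) − P(t)ᵀQ(t), Q'(t) = Q(t)Ω(t), and P'(t) = P(t)Ω(t). Then the curve M(t) := Q(t)ᵀP(t) − P(t)ᵀQ(t) is differentiable and satisfies the rigid body equation M'(t) = M(t)Ω(t) − Ω(t)M(t) for all t. -/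
open Matrix

/-!
By the product rule and `Ωᵀ = -Ω`, `(QᵀP)' = ΩᵀQᵀP + QᵀPΩ = QᵀPΩ - ΩQᵀP`, and likewise for `PᵀQ`;
subtracting the two gives `M' = MΩ - ΩM`.
-/

namespace Matrix

variable {𝕜 : Type*} [NontriviallyNormedField 𝕜] {l m n : Type*}

theorem hasDerivAt_mul_apply [Fintype m] {A : 𝕜 → Matrix l m 𝕜} {B : 𝕜 → Matrix m n 𝕜}
    {A' : Matrix l m 𝕜} {B' : Matrix m n 𝕜} {x : 𝕜}
    (hA : ∀ i j, HasDerivAt (fun s => A s i j) (A' i j) x)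
    (hB : ∀ i j, HasDerivAt (fun s => B s i j) (B' i j) x) (i : l) (j : n) :
    HasDerivAt (fun s => (A s * B s) i j) ((A' * B x + A x * B') i j) x := by
  simp only [mul_apply, add_apply, ← Finset.sum_add_distrib]
  exact HasDerivAt.fun_sum fun k _ => (hA i k).mul (hB k j)

theorem transpose_mul_mul_add_transpose_mul_mul_of_transpose_eq_neg [Fintype m] [Fintype n]
    (Q P : Matrix m n 𝕜) {Ω : Matrix n n 𝕜} (hΩ : Ωᵀ = -Ω) :
    (Q * Ω)ᵀ * P + Qᵀ * (P * Ω) = Qᵀ * P * Ω - Ω * (Qᵀ * P) := by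
  rw [transpose_mul, hΩ, Matrix.neg_mul, Matrix.neg_mul, Matrix.mul_assoc, Matrix.mul_assoc]
  abel

theorem hasDerivAt_transpose_mul_apply_of_transpose_eq_neg [Fintype m] [Fintype n]
    {Q P : 𝕜 → Matrix m n 𝕜} {Ω : Matrix n n 𝕜} {x : 𝕜} (hΩ : Ωᵀ = -Ω)
    (hQ : ∀ i j, HasDerivAt (fun s => Q s i j) ((Q x * Ω) i j) x)
    (hP : ∀ i j, HasDerivAt (fun s => P s i j) ((P x * Ω) i j) x) (i j : n) :
    HasDerivAt (fun s => ((Q s)ᵀ * P s) i j)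
      (((Q x)ᵀ * P x * Ω - Ω * ((Q x)ᵀ * P x)) i j) x := by
  rw [← transpose_mul_mul_add_transpose_mul_mul_of_transpose_eq_neg _ _ hΩ]
  exact hasDerivAt_mul_apply (fun i j => hQ j i) hP i j

end Matrix

theorem symmetric_representation_rigid_body_general
    {N : ℕ}
    (Q P Ω : ℝ → Matrix (Fin N) (Fin N) ℝ)
    (hskew : ∀ t : ℝ, (Ω t)ᵀ = -Ω t)
    (hQ : ∀ (t : ℝ) (i j : Fin N),
      HasDerivAt (fun s => Q s i j) ((Q t * Ω t) i j) t)
    (hP : ∀ (t : ℝ) (i j : Fin N),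
      HasDerivAt (fun s => P s i j) ((P t * Ω t) i j) t) :
    ∀ (t : ℝ) (i j : Fin N),
      HasDerivAt (fun s => ((Q s)ᵀ * P s - (P s)ᵀ * Q s) i j)
        ((((Q t)ᵀ * P t - (P t)ᵀ * Q t) * Ω t
          - Ω t * ((Q t)ᵀ * P t - (P t)ᵀ * Q t)) i j) t := by
  intro t i j
  have hQP := hasDerivAt_transpose_mul_apply_of_transpose_eq_neg (hskew t) (hQ t) (hP t) i j
  have hPQ := hasDerivAt_transpose_mul_apply_of_transpose_eq_neg (hskew t) (hP t) (hQ t) i j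
  refine (hQP.sub hPQ).congr_deriv ?_
  simp only [Matrix.sub_mul, Matrix.mul_sub, Matrix.sub_apply]
  ring

/-- **Symmetric representation of the SO(N) rigid body.**
If `Q, P` are differentiable matrix curves, `Ω` is a curve of skew-symmetric
matrices related to `Q, P` by the inertia relation `ΛΩ + ΩΛ = QᵀP - PᵀQ`,
and `Q' = QΩ`, `P' = PΩ`, then `M := QᵀP - PᵀQ` is differentiable and
satisfies the rigid body equation `M' = MΩ - ΩM = [M, Ω]`. -/
theorem symmetric_representation_rigid_body
    {N : ℕ} (hN : 1 ≤ N)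
    (Λ : Matrix (Fin N) (Fin N) ℝ)
    (hΛdiag : ∀ i j : Fin N, i ≠ j → Λ i j = 0)
    (hΛpos : ∀ i j : Fin N, i ≠ j → 0 < Λ i i + Λ j j)
    (Q P Ω : ℝ → Matrix (Fin N) (Fin N) ℝ)
    (hskew : ∀ t : ℝ, (Ω t)ᵀ = -Ω t)
    (hJ : ∀ t : ℝ, Λ * Ω t + Ω t * Λ = (Q t)ᵀ * P t - (P t)ᵀ * Q t)
    (hQ : ∀ (t : ℝ) (i j : Fin N),
      HasDerivAt (fun s => Q s i j) ((Q t * Ω t) i j) t)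
    (hP : ∀ (t : ℝ) (i j : Fin N),
      HasDerivAt (fun s => P s i j) ((P t * Ω t) i j) t) :
    ∀ (t : ℝ) (i j : Fin N),
      HasDerivAt (fun s => ((Q s)ᵀ * P s - (P s)ᵀ * Q s) i j)
        ((((Q t)ᵀ * P t - (P t)ᵀ * Q t) * Ω t
          - Ω t * ((Q t)ᵀ * P t - (P t)ᵀ * Q t)) i j) t :=
  symmetric_representation_rigid_body_general Q P Ω hskew hQ hP
end

section
/- Let Λ be a real diagonal N×N matrix with Λ_i + Λ_j > 0 for all i ≠ j. Suppose Q, P : ℝ → Matrix (Fin N) (Fin N) ℝ are differentiable, Ω : ℝ → Matrix (Fin N) (Fin N) ℝ is differentiable with Ω(t) skew-symmetric, ΛΩ(t) + Ω(t)Λ = Q(t)ᵀP(t) − P(t)ᵀQ(t) =: M(t), Q'(t) = Q(t)Ω(t) and P'(t) = P(t)Ω(t) for all t. Then the energy H(t) := (1/8)·trace(Ω(t)ᵀ M(t)) is constant in t. -/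
/-!
Write `J(A) = ΛA + AΛ`. The equations of motion put `M = QᵀP - PᵀQ` in Lax form `M' = [M, Ω]`,
and differentiating `J(Ω) = M` gives `J(Ω') = M'`. As `J` is self-adjoint for the trace form,
`tr(Ω'ᵀ M) = tr(Ωᵀ J(Ω')) = tr(Ωᵀ M')`, and `tr(Ωᵀ [M, Ω]) = -tr(Ω [M, Ω]) = 0` by cyclicity
of the trace. Hence both terms of the derivative `tr(Ω'ᵀ M) + tr(Ωᵀ M')` of `tr(Ωᵀ M)` vanish.
-/

open Matrix

section InertiaOperator

variable {m n : Type*} [Fintype m] [Fintype n] {R : Type*} [CommRing R]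

def inertiaOp (Λ A : Matrix n n R) : Matrix n n R := Λ * A + A * Λ

theorem trace_transpose_mul_inertiaOp_comm {Λ : Matrix n n R} (hΛ : Λ.IsSymm)
    (A B : Matrix n n R) : (Bᵀ * inertiaOp Λ A).trace = (Aᵀ * inertiaOp Λ B).trace := by
  rw [← trace_transpose, inertiaOp, inertiaOp]
  simp only [transpose_mul, transpose_add, transpose_transpose, hΛ.eq, Matrix.mul_add,
    trace_add, Matrix.mul_assoc]
  rw [trace_mul_comm Λ, Matrix.mul_assoc]

theorem trace_mul_lie_self (A M : Matrix n n R) : (A * ⁅M, A⁆).trace = 0 := by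
  rw [Ring.lie_def, Matrix.mul_sub, trace_sub, ← Matrix.mul_assoc, trace_mul_cycle,
    Matrix.mul_assoc, sub_self]

theorem rigid_body_energy_rate_eq_zero {Λ A A' M : Matrix n n R} (hΛ : Λ.IsSymm)
    (hA : Aᵀ = -A) (hM : inertiaOp Λ A = M) (hA' : inertiaOp Λ A' = ⁅M, A⁆) :
    (A'ᵀ * M).trace + (Aᵀ * ⁅M, A⁆).trace = 0 := by
  have hsymm := trace_transpose_mul_inertiaOp_comm hΛ A A'
  rw [hM, hA'] at hsymm
  rw [hsymm, hA, Matrix.neg_mul, trace_neg, trace_mul_lie_self, neg_zero, add_zero]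

theorem transpose_mul_sub_transpose_mul_right_mul (Q P : Matrix m n R) {W : Matrix n n R}
    (hW : Wᵀ = -W) :
    (Q * W)ᵀ * P + Qᵀ * (P * W) - ((P * W)ᵀ * Q + Pᵀ * (Q * W))
      = ⁅Qᵀ * P - Pᵀ * Q, W⁆ := by
  simp only [transpose_mul, hW, Ring.lie_def, Matrix.sub_mul, Matrix.mul_sub, Matrix.neg_mul,
    Matrix.mul_assoc]
  abel

end InertiaOperator

-- Matrices carry no canonical norm, so derivatives of matrix-valued curves are taken entrywise.
def HasEntrywiseDerivAt {m n : Type*} (A : ℝ → Matrix m n ℝ) (A' : Matrix m n ℝ) (t : ℝ) :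
    Prop :=
  ∀ i j, HasDerivAt (fun s => A s i j) (A' i j) t

namespace HasEntrywiseDerivAt

variable {l m n : Type*} {A B : ℝ → Matrix m n ℝ} {A' B' : Matrix m n ℝ} {t : ℝ}

theorem unique (hA : HasEntrywiseDerivAt A A' t) (hA' : HasEntrywiseDerivAt A B' t) : A' = B' :=
  Matrix.ext fun i j => (hA i j).unique (hA' i j)

theorem const (C : Matrix m n ℝ) : HasEntrywiseDerivAt (fun _ => C) 0 t :=
  fun _ _ => hasDerivAt_const _ _

theorem add (hA : HasEntrywiseDerivAt A A' t) (hB : HasEntrywiseDerivAt B B' t) :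
    HasEntrywiseDerivAt (fun s => A s + B s) (A' + B') t :=
  fun i j => (hA i j).add (hB i j)

theorem sub (hA : HasEntrywiseDerivAt A A' t) (hB : HasEntrywiseDerivAt B B' t) :
    HasEntrywiseDerivAt (fun s => A s - B s) (A' - B') t :=
  fun i j => (hA i j).sub (hB i j)

theorem transpose (hA : HasEntrywiseDerivAt A A' t) :
    HasEntrywiseDerivAt (fun s => (A s)ᵀ) A'ᵀ t :=
  fun i j => hA j i

theorem mul [Fintype m] {A : ℝ → Matrix l m ℝ} {A' : Matrix l m ℝ}
    (hA : HasEntrywiseDerivAt A A' t) (hB : HasEntrywiseDerivAt B B' t) :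
    HasEntrywiseDerivAt (fun s => A s * B s) (A' * B t + A t * B') t := fun i j => by
  simpa only [mul_apply, Matrix.add_apply, ← Finset.sum_add_distrib] using
    HasDerivAt.fun_sum fun k _ => (hA i k).fun_mul (hB k j)

theorem trace [Fintype n] {A : ℝ → Matrix n n ℝ} {A' : Matrix n n ℝ}
    (hA : HasEntrywiseDerivAt A A' t) : HasDerivAt (fun s => (A s).trace) A'.trace t :=
  HasDerivAt.fun_sum fun i _ => hA i i

theorem inertiaOp [Fintype n] {A : ℝ → Matrix n n ℝ} {A' : Matrix n n ℝ} (Λ : Matrix n n ℝ)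
    (hA : HasEntrywiseDerivAt A A' t) :
    HasEntrywiseDerivAt (fun s => _root_.inertiaOp Λ (A s)) (_root_.inertiaOp Λ A') t := by
  have h := ((const Λ).mul hA).add (hA.mul (const Λ))
  simp only [Matrix.zero_mul, Matrix.mul_zero, zero_add, add_zero] at h
  exact h

theorem transpose_mul_sub_transpose_mul [Fintype m] [Fintype n] {Q P : ℝ → Matrix m n ℝ}
    {W : Matrix n n ℝ}
    (hQ : HasEntrywiseDerivAt Q (Q t * W) t) (hP : HasEntrywiseDerivAt P (P t * W) t)
    (hW : Wᵀ = -W) :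
    HasEntrywiseDerivAt (fun s => (Q s)ᵀ * P s - (P s)ᵀ * Q s)
      ⁅(Q t)ᵀ * P t - (P t)ᵀ * Q t, W⁆ t := by
  rw [← transpose_mul_sub_transpose_mul_right_mul _ _ hW]
  exact (hQ.transpose.mul hP).sub (hP.transpose.mul hQ)

end HasEntrywiseDerivAt

theorem rigid_body_energy_conservation_general
    {N : ℕ} (Λ : Matrix (Fin N) (Fin N) ℝ)
    (hΛdiag : ∀ i j : Fin N, i ≠ j → Λ i j = 0)
    (Q P Ω Ω' : ℝ → Matrix (Fin N) (Fin N) ℝ)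
    (hskew : ∀ t : ℝ, (Ω t)ᵀ = -Ω t)
    (hΩ : ∀ (t : ℝ) (i j : Fin N),
      HasDerivAt (fun s => Ω s i j) (Ω' t i j) t)
    (hJ : ∀ t : ℝ, Λ * Ω t + Ω t * Λ = (Q t)ᵀ * P t - (P t)ᵀ * Q t)
    (hQ : ∀ (t : ℝ) (i j : Fin N),
      HasDerivAt (fun s => Q s i j) ((Q t * Ω t) i j) t)
    (hP : ∀ (t : ℝ) (i j : Fin N),
      HasDerivAt (fun s => P s i j) ((P t * Ω t) i j) t) :
    ∀ t₁ t₂ : ℝ,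
      (1 / 8 : ℝ) * ((Ω t₁)ᵀ * ((Q t₁)ᵀ * P t₁ - (P t₁)ᵀ * Q t₁)).trace
        = (1 / 8 : ℝ) * ((Ω t₂)ᵀ * ((Q t₂)ᵀ * P t₂ - (P t₂)ᵀ * Q t₂)).trace := by
  set M : ℝ → Matrix (Fin N) (Fin N) ℝ := fun t => (Q t)ᵀ * P t - (P t)ᵀ * Q t
  have hΛ : Λ.IsSymm := IsDiag.isSymm fun i j hij => hΛdiag i j hij
  have hM (t : ℝ) : HasEntrywiseDerivAt M ⁅M t, Ω t⁆ t :=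
    HasEntrywiseDerivAt.transpose_mul_sub_transpose_mul (hQ t) (hP t) (hskew t)
  have hJM : (fun s => inertiaOp Λ (Ω s)) = M := funext hJ
  have hJΩ' (t : ℝ) : inertiaOp Λ (Ω' t) = ⁅M t, Ω t⁆ :=
    (hJM ▸ HasEntrywiseDerivAt.inertiaOp Λ (hΩ t)).unique (hM t)
  have hH (t : ℝ) : HasDerivAt (fun s => ((Ω s)ᵀ * M s).trace) 0 t := by
    convert (HasEntrywiseDerivAt.transpose (hΩ t) |>.mul (hM t)).trace using 1
    rw [trace_add, rigid_body_energy_rate_eq_zero hΛ (hskew t) (hJ t) (hJΩ' t)]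
  intro t₁ t₂
  rw [is_const_of_deriv_eq_zero (fun t => (hH t).differentiableAt) (fun t => (hH t).deriv) t₁ t₂]

/-- **Energy conservation for the symmetric SO(N) rigid body system.**
Along solutions of `Q' = QΩ`, `P' = PΩ` with `Ω` skew-symmetric,
differentiable, and related to `M := QᵀP - PᵀQ` by the inertia relation
`ΛΩ + ΩΛ = M`, the energy `H(t) = (1/8)·trace(Ω(t)ᵀ M(t))` is constant. -/
theorem rigid_body_energy_conservation
    {N : ℕ} (Λ : Matrix (Fin N) (Fin N) ℝ)
    (hΛdiag : ∀ i j : Fin N, i ≠ j → Λ i j = 0)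
    (hΛpos : ∀ i j : Fin N, i ≠ j → 0 < Λ i i + Λ j j)
    (Q P Ω Ω' : ℝ → Matrix (Fin N) (Fin N) ℝ)
    (hskew : ∀ t : ℝ, (Ω t)ᵀ = -Ω t)
    (hΩ : ∀ (t : ℝ) (i j : Fin N),
      HasDerivAt (fun s => Ω s i j) (Ω' t i j) t)
    (hJ : ∀ t : ℝ, Λ * Ω t + Ω t * Λ = (Q t)ᵀ * P t - (P t)ᵀ * Q t)
    (hQ : ∀ (t : ℝ) (i j : Fin N),
      HasDerivAt (fun s => Q s i j) ((Q t * Ω t) i j) t)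
    (hP : ∀ (t : ℝ) (i j : Fin N),
      HasDerivAt (fun s => P s i j) ((P t * Ω t) i j) t) :
    ∀ t₁ t₂ : ℝ,
      (1 / 8 : ℝ) * ((Ω t₁)ᵀ * ((Q t₁)ᵀ * P t₁ - (P t₁)ᵀ * Q t₁)).trace
        = (1 / 8 : ℝ) * ((Ω t₂)ᵀ * ((Q t₂)ᵀ * P t₂ - (P t₂)ᵀ * Q t₂)).trace :=
  rigid_body_energy_conservation_general Λ hΛdiag Q P Ω Ω' hskew hΩ hJ hQ hP
end

section
/- Let K be an invertible symmetric real N×N matrix, σ > 0, and let Q, P, U : ℝ → Matrix (Fin N) (Fin N) ℝ with Q, P differentiable, U(t) skew-symmetric, K(Q'(t) − Q(t)U(t)) = σ²P(t) and P'(t) = P(t)U(t) for all t. Then M(t) := Q(t)ᵀP(t) − P(t)ᵀQ(t) satisfies the rigid body equation M'(t) = M(t)U(t) − U(t)M(t) for all t and for every value of σ² > 0. Hence the optimization (metamorphosis) problem for the SO(N) rigid body yields the same rigid body momentum equation Ṁ = [M, U] as the exactly constrained optimal control problem, independently of the tolerance σ. -/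
open Matrix

/-! Writing `Q' = QU + R`, the skew-symmetry of `U` turns `M' = Q'ᵀP + QᵀPU - UᵀPᵀQ - PᵀQ'`
into `[M, U] + (RᵀP - PᵀR)`. The defect vanishes because `σ²P = KR` with `K` symmetric gives
`σ² RᵀP = RᵀKR = σ² PᵀR`, and `σ ≠ 0`. -/

theorem hasDerivAt_matrix_mul_apply {𝕜 𝔸 : Type*} [NontriviallyNormedField 𝕜] [NormedRing 𝔸]
    [NormedAlgebra 𝕜 𝔸] {l m n : Type*} [Fintype m]
    {A : 𝕜 → Matrix l m 𝔸} {B : 𝕜 → Matrix m n 𝔸} {A' : Matrix l m 𝔸} {B' : Matrix m n 𝔸}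
    {t : 𝕜} (hA : ∀ i j, HasDerivAt (fun s => A s i j) (A' i j) t)
    (hB : ∀ i j, HasDerivAt (fun s => B s i j) (B' i j) t) (i : l) (k : n) :
    HasDerivAt (fun s => (A s * B s) i k) ((A' * B t + A t * B') i k) t := by
  simp only [mul_apply, Matrix.add_apply, ← Finset.sum_add_distrib]
  exact HasDerivAt.fun_sum fun j _ => (hA i j).fun_mul (hB j k)

theorem transpose_mul_eq_of_mul_eq_smul {n R : Type*} [Fintype n] [CommRing R] [NoZeroDivisors R]
    {K X P : Matrix n n R} {c : R} (hc : c ≠ 0) (hK : Kᵀ = K) (h : K * X = c • P) :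
    Xᵀ * P = Pᵀ * X := by
  apply smul_right_injective _ hc
  calc c • (Xᵀ * P) = Xᵀ * (K * X) := by rw [h, Matrix.mul_smul]
    _ = (K * X)ᵀ * X := by rw [transpose_mul, hK, Matrix.mul_assoc]
    _ = c • (Pᵀ * X) := by rw [h, transpose_smul, smul_mul]

theorem momentum_deriv_eq_commutator {n R : Type*} [Fintype n] [CommRing R]
    {Q P U Q' : Matrix n n R} (hU : Uᵀ = -U) (hR : (Q' - Q * U)ᵀ * P = Pᵀ * (Q' - Q * U)) :
    Q'ᵀ * P + Qᵀ * (P * U) - ((P * U)ᵀ * Q + Pᵀ * Q') =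
      (Qᵀ * P - Pᵀ * Q) * U - U * (Qᵀ * P - Pᵀ * Q) := by
  simp only [transpose_sub, transpose_mul, hU, Matrix.sub_mul, Matrix.mul_sub] at hR ⊢
  simp only [Matrix.neg_mul, Matrix.mul_assoc] at hR ⊢
  linear_combination (norm := abel) hR

theorem metamorphosis_rigid_body_same_equation_general
    {N : ℕ} (K : Matrix (Fin N) (Fin N) ℝ) (hKsym : Kᵀ = K)
    (σ : ℝ) (hσ : 0 < σ)
    (Q P U Q' : ℝ → Matrix (Fin N) (Fin N) ℝ)
    (hskew : ∀ t : ℝ, (U t)ᵀ = -U t)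
    (hQ : ∀ (t : ℝ) (i j : Fin N),
      HasDerivAt (fun s => Q s i j) (Q' t i j) t)
    (hKeq : ∀ t : ℝ, K * (Q' t - Q t * U t) = σ ^ 2 • P t)
    (hP : ∀ (t : ℝ) (i j : Fin N),
      HasDerivAt (fun s => P s i j) ((P t * U t) i j) t) :
    ∀ (t : ℝ) (i j : Fin N),
      HasDerivAt (fun s => ((Q s)ᵀ * P s - (P s)ᵀ * Q s) i j)
        ((((Q t)ᵀ * P t - (P t)ᵀ * Q t) * U t
          - U t * ((Q t)ᵀ * P t - (P t)ᵀ * Q t)) i j) t := by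
  intro t i j
  have hsymm := transpose_mul_eq_of_mul_eq_smul (pow_ne_zero 2 hσ.ne') hKsym (hKeq t)
  rw [← momentum_deriv_eq_commutator (hskew t) hsymm]
  exact (hasDerivAt_matrix_mul_apply (fun i j => hQ t j i) (hP t) i j).sub
    (hasDerivAt_matrix_mul_apply (fun i j => hP t j i) (hQ t) i j)

/-- **The metamorphosis optimization problem for the SO(N) rigid body yields
the rigid body equation, independently of the tolerance σ.**  If `K` is
invertible and symmetric, `K(Q' - QU) = σ²P` and `P' = PU` with `U(t)`
skew-symmetric, then `M := QᵀP - PᵀQ` satisfies `M' = MU - UM = [M, U]` for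
every value of `σ² > 0` — the same momentum equation as in the exactly
constrained optimal control problem. -/
theorem metamorphosis_rigid_body_same_equation
    {N : ℕ} (K : Matrix (Fin N) (Fin N) ℝ) (hK : IsUnit K) (hKsym : Kᵀ = K)
    (σ : ℝ) (hσ : 0 < σ)
    (Q P U Q' : ℝ → Matrix (Fin N) (Fin N) ℝ)
    (hskew : ∀ t : ℝ, (U t)ᵀ = -U t)
    (hQ : ∀ (t : ℝ) (i j : Fin N),
      HasDerivAt (fun s => Q s i j) (Q' t i j) t)
    (hKeq : ∀ t : ℝ, K * (Q' t - Q t * U t) = σ ^ 2 • P t)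
    (hP : ∀ (t : ℝ) (i j : Fin N),
      HasDerivAt (fun s => P s i j) ((P t * U t) i j) t) :
    ∀ (t : ℝ) (i j : Fin N),
      HasDerivAt (fun s => ((Q s)ᵀ * P s - (P s)ᵀ * Q s) i j)
        ((((Q t)ᵀ * P t - (P t)ᵀ * Q t) * U t
          - U t * ((Q t)ᵀ * P t - (P t)ᵀ * Q t)) i j) t :=
  metamorphosis_rigid_body_same_equation_general K hKsym σ hσ Q P U Q' hskew hQ hKeq hP
end

section
/- Let n ≥ 1 and suppose u : ℝ × (Fin n → ℝ) → (Fin n → ℝ), π, l : ℝ × (Fin n → ℝ) → (Fin n → ℝ), and k : ℝ × (Fin n → ℝ) → ℝ are twice continuously differentiable and satisfy, at every (t,x): (i) the Clebsch representation u_i = −Σ_a π_a ∂_i l_a − ∂_i k for each i; (ii) ∂ₜπ_a + Σ_j u_j ∂_j π_a = 0 for each a; (iii) ∂ₜl_a + Σ_j u_j ∂_j l_a = 0 for each a. Then u satisfies the Euler fluid momentum equation: for each component i and every (t,x), ∂ₜu_i + Σ_j u_j ∂_j u_i = −∂_i p, where p := ∂ₜk + Σ_j u_j ∂_j k + |u|²/2.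 -/
/-!
Write `D f = ∂ₜf + u·∇f = df (1, u)` for the material derivative. By symmetry of second
derivatives, `D` commutes with a spatial derivative up to a transport term:
`D(∂ᵢf) = ∂ᵢ(Df) - Σⱼ ∂ᵢuⱼ ∂ⱼf`. Applying the derivation `D` to the Clebsch representation
and using `Dπ = 0 = Dl` leaves `Duᵢ = Σⱼ ∂ᵢuⱼ (Σₐ πₐ ∂ⱼlₐ + ∂ⱼk) - ∂ᵢ(Dk)`. By the Clebsch
representation again the bracket is `-uⱼ`, so `Duᵢ = -∂ᵢ(Dk + |u|²/2)`.
-/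

open ContinuousLinearMap

section VectorField

variable {E F : Type*} [NormedAddCommGroup E] [NormedSpace ℝ E]
  [NormedAddCommGroup F] [NormedSpace ℝ F] {f : E → F} {p : E}

theorem ContDiffAt.differentiableAt_fderiv (hf : ContDiffAt ℝ 2 f p) :
    DifferentiableAt ℝ (fderiv ℝ f) p :=
  (hf.fderiv_right (m := 1) (by norm_num)).differentiableAt one_ne_zero

theorem ContDiffAt.differentiableAt_fderiv_apply (hf : ContDiffAt ℝ 2 f p) (v : E) :
    DifferentiableAt ℝ (fun q => fderiv ℝ f q v) p :=
  hf.differentiableAt_fderiv.clm_apply (differentiableAt_const v)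

theorem fderiv_fderiv_apply_vectorField (hf : ContDiffAt ℝ 2 f p) {V : E → E}
    (hV : DifferentiableAt ℝ V p) (w : E) :
    fderiv ℝ (fun q => fderiv ℝ f q (V q)) p w
      = fderiv ℝ (fun q => fderiv ℝ f q w) p (V p) + fderiv ℝ f p (fderiv ℝ V p w) := by
  rw [fderiv_clm_apply hf.differentiableAt_fderiv hV,
    fderiv_clm_apply hf.differentiableAt_fderiv (differentiableAt_const w)]
  simp [hf.isSymmSndFDerivAt (by simp) w (V p), add_comm]

end VectorField

theorem fderiv_half_sum_sq {E ι : Type*} [NormedAddCommGroup E] [NormedSpace ℝ E] [Fintype ι]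
    {u : E → ι → ℝ} {p : E} (hu : DifferentiableAt ℝ u p) (w : E) :
    fderiv ℝ (fun q => (∑ j, u q j ^ 2) / 2) p w
      = ∑ j, u p j * fderiv ℝ (fun q => u q j) p w := by
  have huj : ∀ j, DifferentiableAt ℝ (fun q => u q j) p := differentiableAt_pi.mp hu
  simp_rw [div_eq_mul_inv]
  rw [fderiv_mul_const (DifferentiableAt.fun_sum fun j _ => (huj j).fun_pow 2),
    fderiv_fun_sum fun j _ => (huj j).fun_pow 2]
  simp only [fderiv_fun_pow, huj, Nat.add_one_sub_one, pow_one, nsmul_eq_mul, Nat.cast_ofNat,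
    smul_apply, sum_apply, smul_eq_mul, Finset.mul_sum]
  exact Finset.sum_congr rfl fun j _ => by ring

theorem ContinuousLinearMap.apply_zero_prod_eq_sum {ι : Type*} [Fintype ι] [DecidableEq ι]
    (L : ℝ × (ι → ℝ) →L[ℝ] ℝ) (v : ι → ℝ) :
    L (0, v) = ∑ j, v j * L (0, Pi.single j 1) := by
  have hv : ((0 : ℝ), v) = ∑ j, v j • ((0 : ℝ), (Pi.single j 1 : ι → ℝ)) := by
    ext <;> simp [Prod.fst_sum, Prod.snd_sum, Finset.sum_apply, Pi.single_apply]
  rw [hv, map_sum]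
  simp only [map_smul, smul_eq_mul]

noncomputable section MaterialDerivative

variable {ι : Type*} [Fintype ι]

def materialDeriv (u : ℝ × (ι → ℝ) → ι → ℝ) (f : ℝ × (ι → ℝ) → ℝ) (p : ℝ × (ι → ℝ)) : ℝ :=
  fderiv ℝ f p (1, u p)

variable {u : ℝ × (ι → ℝ) → ι → ℝ} {f g : ℝ × (ι → ℝ) → ℝ} {p : ℝ × (ι → ℝ)}

theorem materialDeriv_neg :
    materialDeriv u (fun q => -f q) p = -materialDeriv u f p := by
  simp [materialDeriv, fderiv_fun_neg]

theorem materialDeriv_sub (hf : DifferentiableAt ℝ f p) (hg : DifferentiableAt ℝ g p) :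
    materialDeriv u (fun q => f q - g q) p = materialDeriv u f p - materialDeriv u g p := by
  simp [materialDeriv, fderiv_fun_sub hf hg]

theorem materialDeriv_mul (hf : DifferentiableAt ℝ f p) (hg : DifferentiableAt ℝ g p) :
    materialDeriv u (fun q => f q * g q) p
      = materialDeriv u f p * g p + f p * materialDeriv u g p := by
  simp [materialDeriv, fderiv_fun_mul hf hg]; ring

theorem materialDeriv_sum {κ : Type*} {s : Finset κ} {F : κ → ℝ × (ι → ℝ) → ℝ}
    (hF : ∀ a ∈ s, DifferentiableAt ℝ (F a) p) :
    materialDeriv u (fun q => ∑ a ∈ s, F a q) p = ∑ a ∈ s, materialDeriv u (F a) p := by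
  simp [materialDeriv, fderiv_fun_sum hF]

theorem ContDiffAt.differentiableAt_materialDeriv (hf : ContDiffAt ℝ 2 f p)
    (hu : DifferentiableAt ℝ u p) : DifferentiableAt ℝ (materialDeriv u f) p :=
  hf.differentiableAt_fderiv.clm_apply ((differentiableAt_const _).prodMk hu)

theorem materialDeriv_eq_neg_sum_mul_sub {κ : Type*} [Fintype κ] {v h : ℝ × (ι → ℝ) → ℝ}
    {π g : κ → ℝ × (ι → ℝ) → ℝ} (hv : ∀ q, v q = -(∑ a, π a q * g a q) - h q)
    (hπ : ∀ a, DifferentiableAt ℝ (π a) p) (hg : ∀ a, DifferentiableAt ℝ (g a) p)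
    (hh : DifferentiableAt ℝ h p) (hDπ : ∀ a, materialDeriv u (π a) p = 0) :
    materialDeriv u v p = -∑ a, π a p * materialDeriv u (g a) p - materialDeriv u h p := by
  rw [funext hv, materialDeriv_sub (by fun_prop) hh, materialDeriv_neg,
    materialDeriv_sum (F := fun a q => π a q * g a q) fun a _ => (hπ a).mul (hg a)]
  simp only [materialDeriv_mul (hπ _) (hg _), hDπ, zero_mul, zero_add]

variable [DecidableEq ι]

theorem materialDeriv_eq_add_sum (u : ℝ × (ι → ℝ) → ι → ℝ) (f : ℝ × (ι → ℝ) → ℝ)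
    (p : ℝ × (ι → ℝ)) :
    materialDeriv u f p
      = fderiv ℝ f p (1, 0) + ∑ j, u p j * fderiv ℝ f p (0, Pi.single j 1) := by
  rw [materialDeriv, ← (fderiv ℝ f p).apply_zero_prod_eq_sum, ← map_add, Prod.mk_add_mk,
    add_zero, zero_add]

theorem materialDeriv_fderiv_apply (hf : ContDiffAt ℝ 2 f p) (hu : DifferentiableAt ℝ u p)
    (w : ℝ × (ι → ℝ)) :
    materialDeriv u (fun q => fderiv ℝ f q w) p
      = fderiv ℝ (materialDeriv u f) p w
        - ∑ j, fderiv ℝ (fun q => u q j) p w * fderiv ℝ f p (0, Pi.single j 1) := by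
  have hV : HasFDerivAt (fun q => ((1 : ℝ), u q)) ((0 : _ →L[ℝ] ℝ).prod (fderiv ℝ u p)) p :=
    (hasFDerivAt_const _ _).prodMk hu.hasFDerivAt
  change _ = fderiv ℝ (fun q => fderiv ℝ f q (1, u q)) p w - _
  rw [fderiv_fderiv_apply_vectorField hf hV.differentiableAt, hV.fderiv, prod_apply,
    zero_apply, (fderiv ℝ f p).apply_zero_prod_eq_sum]
  simp only [fderiv_apply hu, materialDeriv, comp_apply, proj_apply, add_sub_cancel_right]

theorem materialDeriv_fderiv_apply_of_materialDeriv_eq_zero (hf : ContDiffAt ℝ 2 f p)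
    (hu : DifferentiableAt ℝ u p) (hDf : materialDeriv u f = 0) (w : ℝ × (ι → ℝ)) :
    materialDeriv u (fun q => fderiv ℝ f q w) p
      = -∑ j, fderiv ℝ (fun q => u q j) p w * fderiv ℝ f p (0, Pi.single j 1) := by
  rw [materialDeriv_fderiv_apply hf hu, hDf, fderiv_zero, Pi.zero_apply, zero_apply, zero_sub]

end MaterialDerivative

theorem sum_mul_eq_of_clebsch {ι κ : Type*} [Fintype ι] [Fintype κ] {U K : ι → ℝ}
    {π : κ → ℝ} {L : κ → ι → ℝ} (hU : ∀ j, U j = -(∑ a, π a * L a j) - K j) (c : ι → ℝ) :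
    ∑ j, U j * c j = -∑ a, π a * ∑ j, c j * L a j - ∑ j, c j * K j := by
  simp only [hU, sub_mul, neg_mul, Finset.sum_sub_distrib, Finset.sum_neg_distrib,
    Finset.sum_mul, Finset.mul_sum]
  rw [Finset.sum_comm]
  ac_rfl

theorem clebsch_gives_euler_fluid_equations_general
    {n : ℕ}
    (u π l : ℝ × (Fin n → ℝ) → (Fin n → ℝ))
    (k : ℝ × (Fin n → ℝ) → ℝ)
    (hu : ContDiff ℝ 2 u) (hπ : ContDiff ℝ 2 π)
    (hl : ContDiff ℝ 2 l) (hk : ContDiff ℝ 2 k)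
    (hclebsch : ∀ (p : ℝ × (Fin n → ℝ)) (i : Fin n),
      u p i = -(∑ a, π p a * fderiv ℝ (fun q => l q a) p (0, Pi.single i 1))
              - fderiv ℝ k p (0, Pi.single i 1))
    (hadvπ : ∀ (p : ℝ × (Fin n → ℝ)) (a : Fin n),
      fderiv ℝ (fun q => π q a) p (1, 0)
        + ∑ j, u p j * fderiv ℝ (fun q => π q a) p (0, Pi.single j 1) = 0)
    (hadvl : ∀ (p : ℝ × (Fin n → ℝ)) (a : Fin n),
      fderiv ℝ (fun q => l q a) p (1, 0)
        + ∑ j, u p j * fderiv ℝ (fun q => l q a) p (0, Pi.single j 1) = 0) :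
    ∀ (p : ℝ × (Fin n → ℝ)) (i : Fin n),
      fderiv ℝ (fun q => u q i) p (1, 0)
        + ∑ j, u p j * fderiv ℝ (fun q => u q i) p (0, Pi.single j 1)
      = - fderiv ℝ (fun q =>
            fderiv ℝ k q (1, 0)
              + ∑ j, u q j * fderiv ℝ k q (0, Pi.single j 1)
              + (∑ j, u q j ^ 2) / 2) p (0, Pi.single i 1) := by
  intro p i
  simp only [← materialDeriv_eq_add_sum] at hadvπ hadvl ⊢
  have hud : Differentiable ℝ u := hu.differentiable two_ne_zero
  have hla : ∀ a, ContDiffAt ℝ 2 (fun q => l q a) p := fun a => (contDiff_pi.mp hl a).contDiffAt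
  rw [fderiv_fun_add (hk.contDiffAt.differentiableAt_materialDeriv (hud p)) (by fun_prop),
    add_apply, fderiv_half_sum_sq (hud p), sum_mul_eq_of_clebsch (hclebsch p),
    materialDeriv_eq_neg_sum_mul_sub (fun q => hclebsch q i)
      (fun a => differentiableAt_pi.mp (hπ.differentiable two_ne_zero p) a)
      (fun a => (hla a).differentiableAt_fderiv_apply _)
      (hk.contDiffAt.differentiableAt_fderiv_apply _) (hadvπ p),
    materialDeriv_fderiv_apply hk.contDiffAt (hud p)]
  simp only [materialDeriv_fderiv_apply_of_materialDeriv_eq_zero (hla _) (hud p)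
    (funext (hadvl · _)), mul_neg, Finset.sum_neg_distrib]
  ring

/-- **The Clebsch representation yields Euler's fluid equations.**
Suppose `u = -π_a ∇l_a - ∇k` (Clebsch representation) with both Clebsch
variables advected by the flow, `Dπ/Dt = 0 = Dl/Dt`.  Then `u` satisfies the
Euler fluid momentum equation `∂ₜu + (u·∇)u = -∇p` with pressure
`p = Dk/Dt + |u|²/2`.  Here `∂ₜf = fderiv f (1,0)` and
`∂ᵢf = fderiv f (0, eᵢ)`. -/
theorem clebsch_gives_euler_fluid_equations
    {n : ℕ} (hn : 1 ≤ n)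
    (u π l : ℝ × (Fin n → ℝ) → (Fin n → ℝ))
    (k : ℝ × (Fin n → ℝ) → ℝ)
    (hu : ContDiff ℝ 2 u) (hπ : ContDiff ℝ 2 π)
    (hl : ContDiff ℝ 2 l) (hk : ContDiff ℝ 2 k)
    (hclebsch : ∀ (p : ℝ × (Fin n → ℝ)) (i : Fin n),
      u p i = -(∑ a, π p a * fderiv ℝ (fun q => l q a) p (0, Pi.single i 1))
              - fderiv ℝ k p (0, Pi.single i 1))
    (hadvπ : ∀ (p : ℝ × (Fin n → ℝ)) (a : Fin n),
      fderiv ℝ (fun q => π q a) p (1, 0)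
        + ∑ j, u p j * fderiv ℝ (fun q => π q a) p (0, Pi.single j 1) = 0)
    (hadvl : ∀ (p : ℝ × (Fin n → ℝ)) (a : Fin n),
      fderiv ℝ (fun q => l q a) p (1, 0)
        + ∑ j, u p j * fderiv ℝ (fun q => l q a) p (0, Pi.single j 1) = 0) :
    ∀ (p : ℝ × (Fin n → ℝ)) (i : Fin n),
      fderiv ℝ (fun q => u q i) p (1, 0)
        + ∑ j, u p j * fderiv ℝ (fun q => u q i) p (0, Pi.single j 1)
      = - fderiv ℝ (fun q =>
            fderiv ℝ k q (1, 0)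
              + ∑ j, u q j * fderiv ℝ k q (0, Pi.single j 1)
              + (∑ j, u q j ^ 2) / 2) p (0, Pi.single i 1) :=
  clebsch_gives_euler_fluid_equations_general u π l k hu hπ hl hk hclebsch hadvπ hadvl
end

section
/- Let n ≥ 1, σ ∈ ℝ, and suppose u : ℝ × (Fin n → ℝ) → (Fin n → ℝ), π, l : ℝ × (Fin n → ℝ) → (Fin n → ℝ), and k : ℝ × (Fin n → ℝ) → ℝ are twice continuously differentiable and satisfy, at every (t,x): (i) u_i = −Σ_a π_a ∂_i l_a − ∂_i k for each i; (ii) ∂ₜπ_a + Σ_j u_j ∂_j π_a = 0 for each a; (iii) the metamorphosis relation ∂ₜl_a + Σ_j u_j ∂_j l_a = σ² π_a for each a. Then u still satisfies the Euler fluid momentum equation: for each i and every (t,x), ∂ₜu_i + Σ_j u_j ∂_j u_i = −∂_i p, where now p := ∂ₜk + Σ_j u_j ∂_j k + |u|²/2 + σ²|π|²/2. In particular the resulting momentum equation has the same Euler form for every value of σ², the penalty σ²π appearing only as a gauge transformation (redefinition) of the pressure. -/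
/-!
Write the velocity as the spatial part of the space-time one-form `θ = -π_a dl_a - dk` and let
`V = (1, u)`, so that `D/Dt` is the derivative along `V`. Differentiating `θ(w)` along `V` and
commuting the two derivatives (symmetry of second derivatives) costs the term `θ(∂_w V)`, which
is `u · ∂_w u = ∂_w |u|²/2`. The transport laws `Dπ = 0` and `Dl = σ²π` turn what is left into
`-∂_w (Dk + σ²|π|²/2)`, so `σ²` only enters through the pressure.
-/

theorem ContinuousLinearMap.apply_prod_eq_sum_single {ι M : Type*} [Fintype ι] [DecidableEq ι]
    [AddCommGroup M] [Module ℝ M] [TopologicalSpace M]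
    (L : ℝ × (ι → ℝ) →L[ℝ] M) (s : ℝ) (v : ι → ℝ) :
    L (s, v) = s • L (1, 0) + ∑ j, v j • L (0, Pi.single j 1) := by
  have hsv : ((s, v) : ℝ × (ι → ℝ)) = s • (1, 0) + ∑ j, v j • ((0 : ℝ), Pi.single j 1) := by
    refine Prod.ext (by simp [Prod.fst_sum]) ?_
    simpa [Prod.snd_sum] using pi_eq_sum_univ' v
  rw [hsv, map_add, map_sum]
  simp only [map_smul]

section Calculus

variable {E : Type*} [NormedAddCommGroup E] [NormedSpace ℝ E]

theorem fderiv_fderiv_apply_comm {F : Type*} [NormedAddCommGroup F] [NormedSpace ℝ F]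
    {f : E → F} {V : E → E} {p : E} (hf : ContDiffAt ℝ 2 f p) (hV : DifferentiableAt ℝ V p)
    (w : E) :
    fderiv ℝ (fun q => fderiv ℝ f q w) p (V p)
      = fderiv ℝ (fun q => fderiv ℝ f q (V q)) p w - fderiv ℝ f p (fderiv ℝ V p w) := by
  have hf' : DifferentiableAt ℝ (fderiv ℝ f) p :=
    (hf.fderiv_right (m := 1) le_rfl).differentiableAt one_ne_zero
  rw [fderiv_clm_apply hf' hV, fderiv_clm_apply hf' (differentiableAt_const w)]
  simp [hf.isSymmSndFDerivAt (by simp) (V p) w]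

theorem hasFDerivAt_sum_sq_div_two {ι : Type*} [Fintype ι] {f : E → ι → ℝ} {p : E}
    (hf : DifferentiableAt ℝ f p) :
    HasFDerivAt (fun q => (∑ j, f q j ^ 2) / 2) (∑ j, f p j • fderiv ℝ (fun q => f q j) p) p := by
  have hsum := HasFDerivAt.fun_sum (u := Finset.univ) fun j _ =>
    (differentiableAt_pi.1 hf j).hasFDerivAt.pow 2
  refine (hsum.mul_const (2⁻¹ : ℝ)).congr_fderiv ?_
  ext w
  simp [Finset.mul_sum, ← mul_assoc]

end Calculus

section Clebsch

variable {E ι : Type*} [NormedAddCommGroup E] [NormedSpace ℝ E] [Fintype ι]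

noncomputable def clebschForm (π l : E → ι → ℝ) (k : E → ℝ) (q : E) : E →L[ℝ] ℝ :=
  -(∑ a, π q a • fderiv ℝ (fun r => l r a) q) - fderiv ℝ k q

theorem clebschForm_apply (π l : E → ι → ℝ) (k : E → ℝ) (q w : E) :
    clebschForm π l k q w = -(∑ a, π q a * fderiv ℝ (fun r => l r a) q w) - fderiv ℝ k q w := by
  simp [clebschForm]

theorem fderiv_clebschForm_apply {π l : E → ι → ℝ} {k : E → ℝ} {p : E}
    (hπ : DifferentiableAt ℝ π p) (hl : ContDiffAt ℝ 2 l p) (hk : ContDiffAt ℝ 2 k p)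
    (v w : E) :
    fderiv ℝ (fun q => clebschForm π l k q w) p v
      = -(∑ a, (π p a * fderiv ℝ (fun q => fderiv ℝ (fun r => l r a) q w) p v
          + fderiv ℝ (fun r => l r a) p w * fderiv ℝ (fun q => π q a) p v))
        - fderiv ℝ (fun q => fderiv ℝ k q w) p v := by
  have hdiff {f : E → ℝ} (hf : ContDiffAt ℝ 2 f p) :
      DifferentiableAt ℝ (fun q => fderiv ℝ f q w) p :=
    ((hf.fderiv_right (m := 1) le_rfl).differentiableAt one_ne_zero).clm_apply
      (differentiableAt_const w)
  have hπa a : DifferentiableAt ℝ (fun q => π q a) p := differentiableAt_pi.1 hπ a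
  have hla a : DifferentiableAt ℝ (fun q => fderiv ℝ (fun r => l r a) q w) p :=
    hdiff (contDiffAt_pi.1 hl a)
  simp only [clebschForm_apply]
  rw [fderiv_fun_sub (DifferentiableAt.fun_sum fun a _ => (hπa a).fun_mul (hla a)).fun_neg
      (hdiff hk), fderiv_fun_neg, fderiv_fun_sum fun a _ => (hπa a).fun_mul (hla a)]
  simp [fderiv_fun_mul (hπa _) (hla _)]

theorem fderiv_clebschForm_apply_of_transport {π l : E → ι → ℝ} {k : E → ℝ} {V : E → E}
    {p : E} (c : ℝ) (hπ : DifferentiableAt ℝ π p) (hl : ContDiff ℝ 2 l) (hk : ContDiff ℝ 2 k)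
    (hV : DifferentiableAt ℝ V p) (hπV : ∀ a, fderiv ℝ (fun r => π r a) p (V p) = 0)
    (hlV : ∀ q a, fderiv ℝ (fun r => l r a) q (V q) = c * π q a) (w : E) :
    fderiv ℝ (fun q => clebschForm π l k q w) p (V p)
      = -(fderiv ℝ (fun q => fderiv ℝ k q (V q)) p w
          + c * ∑ a, π p a * fderiv ℝ (fun q => π q a) p w)
        - clebschForm π l k p (fderiv ℝ V p w) := by
  have hlw a : fderiv ℝ (fun q => fderiv ℝ (fun r => l r a) q w) p (V p)
      = c * fderiv ℝ (fun q => π q a) p w - fderiv ℝ (fun r => l r a) p (fderiv ℝ V p w) := by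
    rw [fderiv_fderiv_apply_comm (contDiff_pi.1 hl a).contDiffAt hV, funext (hlV · a),
      fderiv_const_mul (differentiableAt_pi.1 hπ a)]
    rfl
  rw [fderiv_clebschForm_apply hπ hl.contDiffAt hk.contDiffAt, clebschForm_apply,
    fderiv_fderiv_apply_comm hk.contDiffAt hV]
  simp only [hlw, hπV, mul_zero, add_zero, mul_sub, Finset.sum_sub_distrib, Finset.mul_sum,
    mul_left_comm c]
  ring

end Clebsch

theorem metamorphosis_gives_euler_fluid_equations_general
    {n : ℕ} (σ : ℝ)
    (u π l : ℝ × (Fin n → ℝ) → (Fin n → ℝ))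
    (k : ℝ × (Fin n → ℝ) → ℝ)
    (hu : ContDiff ℝ 2 u) (hπ : ContDiff ℝ 2 π)
    (hl : ContDiff ℝ 2 l) (hk : ContDiff ℝ 2 k)
    (hclebsch : ∀ (p : ℝ × (Fin n → ℝ)) (i : Fin n),
      u p i = -(∑ a, π p a * fderiv ℝ (fun q => l q a) p (0, Pi.single i 1))
              - fderiv ℝ k p (0, Pi.single i 1))
    (hadvπ : ∀ (p : ℝ × (Fin n → ℝ)) (a : Fin n),
      fderiv ℝ (fun q => π q a) p (1, 0)
        + ∑ j, u p j * fderiv ℝ (fun q => π q a) p (0, Pi.single j 1) = 0)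
    (hmeta : ∀ (p : ℝ × (Fin n → ℝ)) (a : Fin n),
      fderiv ℝ (fun q => l q a) p (1, 0)
        + ∑ j, u p j * fderiv ℝ (fun q => l q a) p (0, Pi.single j 1)
      = σ ^ 2 * π p a) :
    ∀ (p : ℝ × (Fin n → ℝ)) (i : Fin n),
      fderiv ℝ (fun q => u q i) p (1, 0)
        + ∑ j, u p j * fderiv ℝ (fun q => u q i) p (0, Pi.single j 1)
      = - fderiv ℝ (fun q =>
            fderiv ℝ k q (1, 0)
              + ∑ j, u q j * fderiv ℝ k q (0, Pi.single j 1)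
              + (∑ j, u q j ^ 2) / 2
              + σ ^ 2 * (∑ a, π q a ^ 2) / 2) p (0, Pi.single i 1) := by
  intro p i
  set V : ℝ × (Fin n → ℝ) → ℝ × (Fin n → ℝ) := fun q => (1, u q)
  have hud : Differentiable ℝ u := hu.differentiable two_ne_zero
  have hπd : Differentiable ℝ π := hπ.differentiable two_ne_zero
  have hV : Differentiable ℝ V := (differentiable_const _).prodMk hud
  have hmaterial (f : ℝ × (Fin n → ℝ) → ℝ) (q) :
      fderiv ℝ f q (1, 0) + ∑ j, u q j * fderiv ℝ f q (0, Pi.single j 1) = fderiv ℝ f q (V q) := by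
    simp [V, (fderiv ℝ f q).apply_prod_eq_sum_single 1 (u q)]
  have hu_clebschForm q j : u q j = clebschForm π l k q (0, Pi.single j 1) := by
    rw [clebschForm_apply, hclebsch]
  have hθ (v : Fin n → ℝ) : clebschForm π l k p (0, v) = ∑ j, v j * u p j := by
    simp [(clebschForm π l k p).apply_prod_eq_sum_single 0 v, ← hu_clebschForm]
  have hdV w : fderiv ℝ V p w = (0, fun j => fderiv ℝ (fun q => u q j) p w) := by
    rw [DifferentiableAt.fderiv_prodMk (differentiableAt_const _) (hud p)]
    simp [fderiv_apply (hud p)]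
  have hDk : Differentiable ℝ fun q => fderiv ℝ k q (V q) :=
    ((hk.fderiv_right (m := 1) (by norm_num)).differentiable one_ne_zero).clm_apply hV
  have hEu := hasFDerivAt_sum_sq_div_two (hud p)
  have hEπ := hasFDerivAt_sum_sq_div_two (hπd p)
  simp only [hmaterial] at hadvπ hmeta ⊢
  simp only [mul_div_assoc]
  rw [funext (hu_clebschForm · i), fderiv_clebschForm_apply_of_transport (σ ^ 2) (hπd p) hl hk (hV p)
      (hadvπ p) hmeta,
    fderiv_fun_add ((hDk p).fun_add hEu.differentiableAt) (hEπ.differentiableAt.const_mul _),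
    fderiv_fun_add (hDk p) hEu.differentiableAt, fderiv_const_mul hEπ.differentiableAt,
    hEu.fderiv, hEπ.fderiv, hdV, hθ]
  simp only [add_apply, sum_apply, smul_apply, smul_eq_mul, mul_comm]
  ring

/-- **Metamorphosis yields the same Euler fluid equations for any σ².**
Suppose `u = -π_a ∇l_a - ∇k` (Clebsch form of the momentum), `Dπ/Dt = 0`,
and the metamorphosis penalty relation `Dl/Dt = σ²π` holds.  Then `u` still
satisfies the Euler fluid momentum equation `∂ₜu + (u·∇)u = -∇p`, now with
pressure `p = Dk/Dt + |u|²/2 + σ²|π|²/2`: the penalty appears only as a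
gauge transformation (redefinition) of the pressure, for every value
of `σ²`. -/
theorem metamorphosis_gives_euler_fluid_equations
    {n : ℕ} (hn : 1 ≤ n) (σ : ℝ)
    (u π l : ℝ × (Fin n → ℝ) → (Fin n → ℝ))
    (k : ℝ × (Fin n → ℝ) → ℝ)
    (hu : ContDiff ℝ 2 u) (hπ : ContDiff ℝ 2 π)
    (hl : ContDiff ℝ 2 l) (hk : ContDiff ℝ 2 k)
    (hclebsch : ∀ (p : ℝ × (Fin n → ℝ)) (i : Fin n),
      u p i = -(∑ a, π p a * fderiv ℝ (fun q => l q a) p (0, Pi.single i 1))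
              - fderiv ℝ k p (0, Pi.single i 1))
    (hadvπ : ∀ (p : ℝ × (Fin n → ℝ)) (a : Fin n),
      fderiv ℝ (fun q => π q a) p (1, 0)
        + ∑ j, u p j * fderiv ℝ (fun q => π q a) p (0, Pi.single j 1) = 0)
    (hmeta : ∀ (p : ℝ × (Fin n → ℝ)) (a : Fin n),
      fderiv ℝ (fun q => l q a) p (1, 0)
        + ∑ j, u p j * fderiv ℝ (fun q => l q a) p (0, Pi.single j 1)
      = σ ^ 2 * π p a) :
    ∀ (p : ℝ × (Fin n → ℝ)) (i : Fin n),
      fderiv ℝ (fun q => u q i) p (1, 0)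
        + ∑ j, u p j * fderiv ℝ (fun q => u q i) p (0, Pi.single j 1)
      = - fderiv ℝ (fun q =>
            fderiv ℝ k q (1, 0)
              + ∑ j, u q j * fderiv ℝ k q (0, Pi.single j 1)
              + (∑ j, u q j ^ 2) / 2
              + σ ^ 2 * (∑ a, π q a ^ 2) / 2) p (0, Pi.single i 1) :=
  metamorphosis_gives_euler_fluid_equations_general σ u π l k hu hπ hl hk hclebsch hadvπ hmeta
end

section
/- Let n ≥ 1, let u : ℝ × (Fin n → ℝ) → (Fin n → ℝ) be continuously differentiable and p : ℝ × (Fin n → ℝ) → ℝ be continuously differentiable, such that u solves the Euler momentum equation ∂ₜu_i + Σ_j u_j ∂_j u_i = −∂_i p at every (t,x). Let g : ℝ × (Fin n → ℝ) → (Fin n → ℝ) be twice continuously differentiable with ∂ₜg(t, x) = u(t, g(t, x)), and let γ : ℝ → (Fin n → ℝ) be a continuously differentiable closed curve with γ(0) = γ(1). Then the circulation C(t) := ∫₀¹ ⟨u(t, g(t, γ(s))), ∂ₛ[g(t, γ(s))]⟩ ds is constant in t (Kelvin's circulation theorem). -/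
/-!
Along a trajectory of the flow the Euler equation says that the velocity `u(t, g(t, x))` has time
derivative `-∇p`, while a material tangent vector `W = ∂ₛ[g(t, γ(s))]` obeys the variational
equation `∂ₜW = ∂ₓu W`, by symmetry of the second derivative of `g`. Hence
`∂ₜ⟨u, W⟩ = ⟨u, ∂ₓu W⟩ - ∂ₓp W = ∂ₛ(|u|²/2 - p)` along the loop. Differentiating under the
integral sign, the derivative of the circulation is the integral of an `s`-derivative over a closed
loop, which vanishes.
-/

open Function

theorem HasDerivAt.dotProduct {ι : Type*} [Fintype ι] {f g : ℝ → ι → ℝ} {f' g' : ι → ℝ} {t : ℝ}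
    (hf : HasDerivAt f f' t) (hg : HasDerivAt g g' t) :
    HasDerivAt (fun t => f t ⬝ᵥ g t) (f' ⬝ᵥ g t + f t ⬝ᵥ g') t := by
  have h := HasDerivAt.fun_sum (u := Finset.univ) fun i _ =>
    (hasDerivAt_pi.1 hf i).mul (hasDerivAt_pi.1 hg i)
  rwa [Finset.sum_add_distrib] at h

theorem ContinuousLinearMap.map_zero_prod_eq_dotProduct {R M ι : Type*} [CommSemiring R]
    [TopologicalSpace R] [TopologicalSpace M] [AddCommMonoid M] [Module R M] [Fintype ι]
    [DecidableEq ι] (T : M × (ι → R) →L[R] R) (w : ι → R) :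
    T (0, w) = w ⬝ᵥ fun i => T (0, Pi.single i 1) := by
  have hw : ((0 : M), w) = ∑ i, w i • ((0 : M), (Pi.single i 1 : ι → R)) := by
    simp [Prod.ext_iff, Prod.fst_sum, Prod.snd_sum, ← pi_eq_sum_univ']
  rw [hw, map_sum]
  simp only [map_smul, smul_eq_mul]
  rfl

theorem hasDerivAt_intervalIntegral_of_continuous {E : Type*} [NormedAddCommGroup E]
    [NormedSpace ℝ E] {F F' : ℝ → ℝ → E} (hF : Continuous (uncurry F))
    (hF' : Continuous (uncurry F')) (hderiv : ∀ t s, HasDerivAt (F · s) (F' t s) t)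
    (a b t : ℝ) :
    HasDerivAt (fun t => ∫ s in a..b, F t s) (∫ s in a..b, F' t s) t := by
  have hK : IsCompact (Metric.closedBall t 1 ×ˢ Set.uIcc a b) :=
    (isCompact_closedBall t 1).prod isCompact_uIcc
  obtain ⟨M, hM⟩ := hK.exists_bound_of_continuousOn hF'.continuousOn
  exact (intervalIntegral.hasDerivAt_integral_of_dominated_loc_of_deriv_le (bound := fun _ => M)
    (Metric.closedBall_mem_nhds t one_pos)
    (.of_forall fun t => (hF.comp (Continuous.prodMk_right t)).aestronglyMeasurable)
    ((hF.comp (Continuous.prodMk_right t)).intervalIntegrable a b)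
    (hF'.comp (Continuous.prodMk_right t)).aestronglyMeasurable
    (.of_forall fun s hs t' ht' => hM (t', s) ⟨ht', Set.uIoc_subset_uIcc hs⟩)
    intervalIntegrable_const (.of_forall fun s _ t' _ => hderiv t' s)).2

section Flow

variable {E F : Type*} [NormedAddCommGroup E] [NormedSpace ℝ E] [NormedAddCommGroup F]
  [NormedSpace ℝ F]

def IsFlowOf (u : ℝ × F → F) (g : ℝ × E → F) : Prop :=
  ∀ t x, HasDerivAt (fun s => g (s, x)) (u (t, g (t, x))) t

theorem IsFlowOf.fderiv_apply_one_zero {u : ℝ × F → F} {g : ℝ × E → F} (hflow : IsFlowOf u g)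
    {q : ℝ × E} (hg : DifferentiableAt ℝ g q) :
    fderiv ℝ g q (1, 0) = u (q.1, g q) :=
  (hg.hasFDerivAt.comp_hasDerivAt q.1
    ((hasDerivAt_id _).prodMk (hasDerivAt_const _ q.2))).unique (hflow q.1 q.2)

theorem IsFlowOf.hasDerivAt_fderiv_apply_zero_prod {u : ℝ × F → F} {g : ℝ × E → F}
    (hflow : IsFlowOf u g) (hg : ContDiff ℝ 2 g) {t : ℝ} {x : E}
    (hu : DifferentiableAt ℝ u (t, g (t, x))) (v : E) :
    HasDerivAt (fun t => fderiv ℝ g (t, x) (0, v))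
      (fderiv ℝ u (t, g (t, x)) (0, fderiv ℝ g (t, x) (0, v))) t := by
  have hgd : Differentiable ℝ g := hg.differentiable two_ne_zero
  have hDg : Differentiable ℝ (fderiv ℝ g) :=
    (hg.fderiv_right (by norm_num)).differentiable one_ne_zero
  set D2 := fderiv ℝ (fderiv ℝ g) (t, x)
  have htime : HasDerivAt (fun t => fderiv ℝ g (t, x) (0, v)) (D2 (1, 0) (0, v)) t := by
    simpa only [comp_apply, map_zero, add_zero] using
      ((hDg _).hasFDerivAt.comp_hasDerivAt t
        ((hasDerivAt_id' t).prodMk (hasDerivAt_const t x))).clm_apply (hasDerivAt_const t (0, v))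
  -- `∂ₜ∂ₓg = ∂ₓ∂ₜg = ∂ₓ(u(t, g))`
  have hsymm : D2 (1, 0) (0, v) = D2 (0, v) (1, 0) :=
    hg.contDiffAt.isSymmSndFDerivAt (by simp) _ _
  have hDg_time : HasFDerivAt (fun q => fderiv ℝ g q (1, 0))
      ((fderiv ℝ g (t, x)).comp 0 + D2.flip (1, 0)) (t, x) :=
    (hDg _).hasFDerivAt.clm_apply (hasFDerivAt_const _ _)
  have hvel : HasFDerivAt (fun q : ℝ × E => u (q.1, g q))
      ((fderiv ℝ u (t, g (t, x))).comp ((ContinuousLinearMap.fst ℝ ℝ E).prod (fderiv ℝ g (t, x))))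
      (t, x) :=
    hu.hasFDerivAt.comp (t, x) (hasFDerivAt_fst.prodMk (hgd _).hasFDerivAt)
  rw [show (fun q => fderiv ℝ g q (1, 0)) = fun q : ℝ × E => u (q.1, g q) from
    funext fun q => hflow.fderiv_apply_one_zero (hgd q)] at hDg_time
  have hD2 := congr($(hDg_time.unique hvel) (0, v))
  simp only [ContinuousLinearMap.comp_zero, zero_add, ContinuousLinearMap.flip_apply,
    ContinuousLinearMap.comp_apply, ContinuousLinearMap.prod_apply,
    ContinuousLinearMap.coe_fst'] at hD2
  rwa [hsymm, hD2] at htime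

end Flow

section Euler

variable {ι : Type*} [Fintype ι] [DecidableEq ι]

def SolvesEuler (u : ℝ × (ι → ℝ) → (ι → ℝ)) (p : ℝ × (ι → ℝ) → ℝ) : Prop :=
  ∀ (q : ℝ × (ι → ℝ)) (i : ι),
    fderiv ℝ (fun r => u r i) q (1, 0)
      + ∑ j, u q j * fderiv ℝ (fun r => u r i) q (0, Pi.single j 1)
    = - fderiv ℝ p q (0, Pi.single i 1)

theorem SolvesEuler.fderiv_apply_one_self {u : ℝ × (ι → ℝ) → (ι → ℝ)} {p : ℝ × (ι → ℝ) → ℝ}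
    (heuler : SolvesEuler u p) {q : ℝ × (ι → ℝ)} (hu : DifferentiableAt ℝ u q) :
    fderiv ℝ u q (1, u q) = -fun i => fderiv ℝ p q (0, Pi.single i 1) := by
  ext i
  have hcomp : fderiv ℝ u q (1, u q) i = fderiv ℝ (fun r => u r i) q ((1, 0) + (0, u q)) := by
    rw [fderiv_apply hu i]; simp
  rw [hcomp, map_add, (fderiv ℝ (fun r => u r i) q).map_zero_prod_eq_dotProduct]
  exact heuler q i

theorem SolvesEuler.hasDerivAt_dotProduct {u : ℝ × (ι → ℝ) → (ι → ℝ)} {p : ℝ × (ι → ℝ) → ℝ}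
    (heuler : SolvesEuler u p) {X V : ℝ → ι → ℝ} {t : ℝ} (hu : DifferentiableAt ℝ u (t, X t))
    (hX : HasDerivAt X (u (t, X t)) t) (hV : HasDerivAt V (fderiv ℝ u (t, X t) (0, V t)) t) :
    HasDerivAt (fun t => u (t, X t) ⬝ᵥ V t)
      (u (t, X t) ⬝ᵥ fderiv ℝ u (t, X t) (0, V t) - fderiv ℝ p (t, X t) (0, V t)) t := by
  have hU := hu.hasFDerivAt.comp_hasDerivAt t ((hasDerivAt_id' t).prodMk hX)
  rw [heuler.fderiv_apply_one_self hu] at hU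
  refine (hU.dotProduct hV).congr_deriv ?_
  rw [neg_dotProduct, dotProduct_comm, (fderiv ℝ p (t, X t)).map_zero_prod_eq_dotProduct,
    comp_apply]
  ring

end Euler

theorem hasDerivAt_dotProduct_self_div_two_sub {ι F : Type*} [Fintype ι] [NormedAddCommGroup F]
    [NormedSpace ℝ F] {u : ℝ × F → (ι → ℝ)} {p : ℝ × F → ℝ} {c : ℝ → F} {c' : F} {t s : ℝ}
    (hu : DifferentiableAt ℝ u (t, c s)) (hp : DifferentiableAt ℝ p (t, c s))
    (hc : HasDerivAt c c' s) :
    HasDerivAt (fun s => u (t, c s) ⬝ᵥ u (t, c s) / 2 - p (t, c s))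
      (u (t, c s) ⬝ᵥ fderiv ℝ u (t, c s) (0, c') - fderiv ℝ p (t, c s) (0, c')) s := by
  have hpath : HasDerivAt (fun s => (t, c s)) (0, c') s := (hasDerivAt_const s t).prodMk hc
  have hU := hu.hasFDerivAt.comp_hasDerivAt s hpath
  refine (((hU.dotProduct hU).div_const 2).sub
    (hp.hasFDerivAt.comp_hasDerivAt s hpath)).congr_deriv ?_
  rw [dotProduct_comm (fderiv ℝ u _ _), comp_apply]
  ring

section Circulation

variable {ι E : Type*} [Fintype ι] [DecidableEq ι] [NormedAddCommGroup E] [NormedSpace ℝ E]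

noncomputable def circulation (u : ℝ × (ι → ℝ) → (ι → ℝ)) (g : ℝ × E → (ι → ℝ)) (γ : ℝ → E)
    (t : ℝ) : ℝ :=
  ∫ s in (0 : ℝ)..1, u (t, g (t, γ s)) ⬝ᵥ deriv (fun r => g (t, γ r)) s

theorem hasDerivAt_circulation {u : ℝ × (ι → ℝ) → (ι → ℝ)} {p : ℝ × (ι → ℝ) → ℝ}
    {g : ℝ × E → (ι → ℝ)} {γ : ℝ → E} (hu : ContDiff ℝ 1 u) (hp : ContDiff ℝ 1 p)
    (hg : ContDiff ℝ 2 g) (hγ : ContDiff ℝ 1 γ) (heuler : SolvesEuler u p)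
    (hflow : IsFlowOf u g) (hclosed : γ 0 = γ 1) (t : ℝ) :
    HasDerivAt (circulation u g γ) 0 t := by
  have hud := hu.differentiable one_ne_zero
  have hgd := hg.differentiable two_ne_zero
  have := hu.continuous
  have := hg.continuous
  have := hγ.continuous
  have : Continuous (fderiv ℝ u) := hu.continuous_fderiv one_ne_zero
  have : Continuous (fderiv ℝ p) := hp.continuous_fderiv one_ne_zero
  have : Continuous (fderiv ℝ g) := hg.continuous_fderiv (by norm_num)
  have : Continuous (deriv γ) := hγ.continuous_deriv le_rfl
  set W : ℝ → ℝ → (ι → ℝ) := fun t s => fderiv ℝ g (t, γ s) (0, deriv γ s)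
  set L' : ℝ → ℝ → ℝ := fun t s => u (t, g (t, γ s)) ⬝ᵥ fderiv ℝ u (t, g (t, γ s)) (0, W t s)
    - fderiv ℝ p (t, g (t, γ s)) (0, W t s)
  have hW : ∀ t s, HasDerivAt (fun r => g (t, γ r)) (W t s) s := fun t s =>
    (hgd _).hasFDerivAt.comp_hasDerivAt s
      ((hasDerivAt_const s t).prodMk (hγ.differentiable one_ne_zero s).hasDerivAt)
  have hF_cont : Continuous (uncurry fun t s => u (t, g (t, γ s)) ⬝ᵥ W t s) := by fun_prop
  have hL'_cont : Continuous (uncurry L') := by fun_prop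
  have hC : circulation u g γ = fun t => ∫ s in (0 : ℝ)..1, u (t, g (t, γ s)) ⬝ᵥ W t s :=
    funext fun t => intervalIntegral.integral_congr fun s _ => by rw [(hW t s).deriv]
  have hL : ∀ s, HasDerivAt
      (fun s => u (t, g (t, γ s)) ⬝ᵥ u (t, g (t, γ s)) / 2 - p (t, g (t, γ s))) (L' t s) s :=
    fun s => hasDerivAt_dotProduct_self_div_two_sub (hud _) (hp.differentiable one_ne_zero _)
      (hW t s)
  rw [hC]
  refine (hasDerivAt_intervalIntegral_of_continuous hF_cont hL'_cont (fun t s =>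
    heuler.hasDerivAt_dotProduct (hud _) (hflow t (γ s))
      (hflow.hasDerivAt_fderiv_apply_zero_prod hg (hud _) _)) 0 1 t).congr_deriv ?_
  rw [intervalIntegral.integral_eq_sub_of_hasDerivAt (fun s _ => hL s)
    ((hL'_cont.comp (Continuous.prodMk_right t)).intervalIntegrable 0 1), hclosed, sub_self]

end Circulation

theorem kelvin_circulation_theorem_general
    {n : ℕ}
    (u : ℝ × (Fin n → ℝ) → (Fin n → ℝ))
    (p : ℝ × (Fin n → ℝ) → ℝ)
    (g : ℝ × (Fin n → ℝ) → (Fin n → ℝ))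
    (γ : ℝ → (Fin n → ℝ))
    (hu : ContDiff ℝ 1 u) (hp : ContDiff ℝ 1 p)
    (hg : ContDiff ℝ 2 g) (hγ : ContDiff ℝ 1 γ)
    (heuler : ∀ (q : ℝ × (Fin n → ℝ)) (i : Fin n),
      fderiv ℝ (fun r => u r i) q (1, 0)
        + ∑ j, u q j * fderiv ℝ (fun r => u r i) q (0, Pi.single j 1)
      = - fderiv ℝ p q (0, Pi.single i 1))
    (hflow : ∀ (t : ℝ) (x : Fin n → ℝ),
      HasDerivAt (fun s => g (s, x)) (u (t, g (t, x))) t)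
    (hclosed : γ 0 = γ 1) :
    ∀ t₁ t₂ : ℝ,
      (∫ s in (0:ℝ)..1,
        ∑ i, u (t₁, g (t₁, γ s)) i * deriv (fun r => g (t₁, γ r)) s i)
      = ∫ s in (0:ℝ)..1,
          ∑ i, u (t₂, g (t₂, γ s)) i * deriv (fun r => g (t₂, γ r)) s i :=
  have hC := hasDerivAt_circulation hu hp hg hγ heuler hflow hclosed
  is_const_of_deriv_eq_zero (fun t => (hC t).differentiableAt) fun t => (hC t).deriv

/-- **Kelvin's circulation theorem.**
If `u` solves the Euler momentum equation `∂ₜuᵢ + Σⱼ uⱼ∂ⱼuᵢ = -∂ᵢp`, `g` is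
a `C²` flow map of `u` (`∂ₜg(t,x) = u(t, g(t,x))`), and `γ` is a `C¹` closed
curve, then the circulation
`C(t) = ∫₀¹ ⟨u(t, g(t,γ(s))), ∂ₛ[g(t,γ(s))]⟩ ds` is constant in `t`. -/
theorem kelvin_circulation_theorem
    {n : ℕ} (hn : 1 ≤ n)
    (u : ℝ × (Fin n → ℝ) → (Fin n → ℝ))
    (p : ℝ × (Fin n → ℝ) → ℝ)
    (g : ℝ × (Fin n → ℝ) → (Fin n → ℝ))
    (γ : ℝ → (Fin n → ℝ))
    (hu : ContDiff ℝ 1 u) (hp : ContDiff ℝ 1 p)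
    (hg : ContDiff ℝ 2 g) (hγ : ContDiff ℝ 1 γ)
    (heuler : ∀ (q : ℝ × (Fin n → ℝ)) (i : Fin n),
      fderiv ℝ (fun r => u r i) q (1, 0)
        + ∑ j, u q j * fderiv ℝ (fun r => u r i) q (0, Pi.single j 1)
      = - fderiv ℝ p q (0, Pi.single i 1))
    (hflow : ∀ (t : ℝ) (x : Fin n → ℝ),
      HasDerivAt (fun s => g (s, x)) (u (t, g (t, x))) t)
    (hclosed : γ 0 = γ 1) :
    ∀ t₁ t₂ : ℝ,
      (∫ s in (0:ℝ)..1,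
        ∑ i, u (t₁, g (t₁, γ s)) i * deriv (fun r => g (t₁, γ r)) s i)
      = ∫ s in (0:ℝ)..1,
          ∑ i, u (t₂, g (t₂, γ s)) i * deriv (fun r => g (t₂, γ r)) s i :=
  kelvin_circulation_theorem_general u p g γ hu hp hg hγ heuler hflow hclosed
end
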